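/- (Theorem 1, second covariance relation.) Let D ⊆ ℂ be open, let B, Ψ⁺, F, F⁺, ω_{F,F⁺}, ω_{F,Ψ⁺} : D → Matrix (Fin N) (Fin N) ℂ be real-differentiable, and assume on D: (i) ∂_z̄ F + B·conj(F) = 0; (ii) ∂_z F⁺ − conj(F⁺)·B = 0 and ∂_z Ψ⁺ − conj(Ψ⁺)·B = 0; (iii) ∂_z̄ ω_{F,F⁺} = F⁺·conj(F), ∂_z ω_{F,F⁺} = − conj(F⁺)·F, and conj(ω_{F,F⁺}) = − ω_{F,F⁺}; (iv) ∂_z̄ ω_{F,Ψ⁺} = Ψ⁺·conj(F), ∂_z ω_{F,Ψ⁺} = − conj(Ψ⁺)·F, and conj(ω_{F,Ψ⁺}) = − ω_{F,Ψ⁺}; (v) ω_{F,F⁺}(z) is invertible for every z ∈ D. Define Ψ̃⁺ = Ψ⁺ − ω_{F,Ψ⁺} · ω_{F,F⁺}⁻¹ · F⁺ and B̃ = B + F · ω_{F,F⁺}⁻¹ · F⁺. Then ∂_z Ψ̃⁺ − conj(Ψ̃⁺) · B̃ = 0 on D. -/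

import Mathlib

open Complex Matrix

/-- Entrywise Wirtinger derivative ∂_z f = (1/2)(∂f/∂x − i ∂f/∂y). -/
noncomputable def wDz {N : ℕ} (f : ℂ → Matrix (Fin N) (Fin N) ℂ) (z : ℂ) :
    Matrix (Fin N) (Fin N) ℂ :=
  Matrix.of fun i j =>
    (1 / 2 : ℂ) * (fderiv ℝ (fun w => f w i j) z 1
      - Complex.I * fderiv ℝ (fun w => f w i j) z Complex.I)

/-- Entrywise Wirtinger derivative ∂_z̄ f = (1/2)(∂f/∂x + i ∂f/∂y). -/
noncomputable def wDzbar {N : ℕ} (f : ℂ → Matrix (Fin N) (Fin N) ℂ) (z : ℂ) :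
    Matrix (Fin N) (Fin N) ℂ :=
  Matrix.of fun i j =>
    (1 / 2 : ℂ) * (fderiv ℝ (fun w => f w i j) z 1
      + Complex.I * fderiv ℝ (fun w => f w i j) z Complex.I)

/-- Real-differentiability, entrywise, at every point of `D`. -/
def MatDiffOn {N : ℕ} (f : ℂ → Matrix (Fin N) (Fin N) ℂ) (D : Set ℂ) : Prop :=
  ∀ z ∈ D, ∀ i j, DifferentiableAt ℝ (fun w => f w i j) z

/-- Entrywise complex conjugate of a matrix. -/
def mconj {N : ℕ} (M : Matrix (Fin N) (Fin N) ℂ) : Matrix (Fin N) (Fin N) ℂ :=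
  M.map (starRingEnd ℂ)

/-!
Using the Leibniz rule, `∂_z (ω⁻¹) = -ω⁻¹ (∂_z ω) ω⁻¹` for `ω = ω_{F,F⁺}`, the conjugate systems
for `F⁺` and `Ψ⁺` and the formula for `∂_z ω_{F,Ψ⁺}`, `∂_z Ψ̃⁺` becomes the noncommutative polynomial
`conj Ψ⁺ B + conj Ψ⁺ F ω⁻¹ F⁺ - ω_{F,Ψ⁺} ω⁻¹ conj F⁺ F ω⁻¹ F⁺ - ω_{F,Ψ⁺} ω⁻¹ conj F⁺ B`.
Since `ω` and `ω_{F,Ψ⁺}` are purely imaginary, so is `ω⁻¹`, hence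
`conj Ψ̃⁺ = conj Ψ⁺ - ω_{F,Ψ⁺} ω⁻¹ conj F⁺`, and `conj Ψ̃⁺ · B̃` expands to the same polynomial.
-/

open Topology

noncomputable def dzScalar (f : ℂ → ℂ) (z : ℂ) : ℂ :=
  (1 / 2 : ℂ) * (fderiv ℝ f z 1 - I * fderiv ℝ f z I)

theorem dzScalar_sub {f g : ℂ → ℂ} {z : ℂ} (hf : DifferentiableAt ℝ f z)
    (hg : DifferentiableAt ℝ g z) :
    dzScalar (fun w => f w - g w) z = dzScalar f z - dzScalar g z := by
  simp only [dzScalar, fderiv_fun_sub hf hg, _root_.sub_apply]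
  ring

theorem dzScalar_mul {f g : ℂ → ℂ} {z : ℂ} (hf : DifferentiableAt ℝ f z)
    (hg : DifferentiableAt ℝ g z) :
    dzScalar (fun w => f w * g w) z = dzScalar f z * g z + f z * dzScalar g z := by
  simp only [dzScalar, fderiv_fun_mul hf hg, _root_.add_apply, _root_.smul_apply, smul_eq_mul]
  ring

theorem dzScalar_sum {ι : Type*} (s : Finset ι) {f : ι → ℂ → ℂ} {z : ℂ}
    (hf : ∀ k ∈ s, DifferentiableAt ℝ (f k) z) :
    dzScalar (fun w => ∑ k ∈ s, f k w) z = ∑ k ∈ s, dzScalar (f k) z := by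
  simp only [dzScalar, fderiv_fun_sum hf, _root_.sum_apply, Finset.mul_sum,
    ← Finset.sum_sub_distrib]

section MatrixFunctions

variable {N : ℕ} {f g : ℂ → Matrix (Fin N) (Fin N) ℂ} {z : ℂ}

def MatDiffAt (f : ℂ → Matrix (Fin N) (Fin N) ℂ) (z : ℂ) : Prop :=
  ∀ i j, DifferentiableAt ℝ (fun w => f w i j) z

theorem MatDiffAt.mul (hf : MatDiffAt f z) (hg : MatDiffAt g z) :
    MatDiffAt (fun w => f w * g w) z := fun i j => by
  simp only [Matrix.mul_apply]
  exact DifferentiableAt.fun_sum fun k _ => (hf i k).mul (hg k j)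

theorem MatDiffAt.differentiableAt_det (hf : MatDiffAt f z) :
    DifferentiableAt ℝ (fun w => (f w).det) z := by
  simp only [Matrix.det_apply']
  exact DifferentiableAt.fun_sum fun σ _ =>
    (HasFDerivAt.finsetProd fun i _ => (hf (σ i) i).hasFDerivAt).differentiableAt.const_mul _

theorem MatDiffAt.adjugate (hf : MatDiffAt f z) : MatDiffAt (fun w => (f w).adjugate) z :=
  fun i j => by
    simp only [Matrix.adjugate_apply]
    refine MatDiffAt.differentiableAt_det fun a b => ?_
    by_cases h : a = j <;> simp [Matrix.updateRow_apply, h, hf a b]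

theorem MatDiffAt.inv (hf : MatDiffAt f z) (hu : IsUnit (f z)) :
    MatDiffAt (fun w => (f w)⁻¹) z := fun i j => by
  simp only [Matrix.inv_def, Ring.inverse_eq_inv', Matrix.smul_apply, smul_eq_mul]
  exact (hf.differentiableAt_det.inv ((Matrix.isUnit_iff_isUnit_det _).mp hu).ne_zero).mul
    (hf.adjugate i j)

theorem wDz_apply (f : ℂ → Matrix (Fin N) (Fin N) ℂ) (z : ℂ) (i j : Fin N) :
    wDz f z i j = dzScalar (fun w => f w i j) z :=
  rfl

theorem Filter.EventuallyEq.wDz_eq (h : f =ᶠ[𝓝 z] g) : wDz f z = wDz g z := by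
  ext i j
  have hij : (fun w => f w i j) =ᶠ[𝓝 z] fun w => g w i j :=
    h.mono fun w hw => congrArg (fun M => M i j) hw
  rw [wDz_apply, wDz_apply, dzScalar, dzScalar, hij.fderiv_eq]

theorem wDz_const (c : Matrix (Fin N) (Fin N) ℂ) : wDz (fun _ => c) z = 0 := by
  ext i j
  simp [wDz_apply, dzScalar]

theorem wDz_sub (hf : MatDiffAt f z) (hg : MatDiffAt g z) :
    wDz (fun w => f w - g w) z = wDz f z - wDz g z := by
  ext i j
  exact dzScalar_sub (hf i j) (hg i j)

theorem wDz_mul (hf : MatDiffAt f z) (hg : MatDiffAt g z) :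
    wDz (fun w => f w * g w) z = wDz f z * g z + f z * wDz g z := by
  ext i j
  simp only [Matrix.add_apply, Matrix.mul_apply, wDz_apply]
  rw [dzScalar_sum _ fun k _ => (hf i k).fun_mul (hg k j), ← Finset.sum_add_distrib]
  exact Finset.sum_congr rfl fun k _ => dzScalar_mul (hf i k) (hg k j)

theorem wDz_inv (hf : MatDiffAt f z) (hu : IsUnit (f z)) :
    wDz (fun w => (f w)⁻¹) z = -((f z)⁻¹ * wDz f z * (f z)⁻¹) := by
  have hdetz : IsUnit (f z).det := (Matrix.isUnit_iff_isUnit_det _).mp hu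
  have hdet : ∀ᶠ w in 𝓝 z, IsUnit (f w).det :=
    (hf.differentiableAt_det.continuousAt.eventually_ne hdetz.ne_zero).mono fun _ => Ne.isUnit
  have hzero : wDz f z * (f z)⁻¹ + f z * wDz (fun w => (f w)⁻¹) z = 0 := by
    rw [← wDz_mul hf (hf.inv hu), ← wDz_const (z := z) (1 : Matrix (Fin N) (Fin N) ℂ)]
    exact Filter.EventuallyEq.wDz_eq (hdet.mono fun w hw => Matrix.mul_nonsing_inv _ hw)
  calc wDz (fun w => (f w)⁻¹) z
      = (f z)⁻¹ * (f z * wDz (fun w => (f w)⁻¹) z) := by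
        rw [← Matrix.mul_assoc, Matrix.nonsing_inv_mul _ hdetz, Matrix.one_mul]
    _ = -((f z)⁻¹ * wDz f z * (f z)⁻¹) := by
        rw [eq_neg_of_add_eq_zero_right hzero]; noncomm_ring

end MatrixFunctions

theorem Matrix.inv_neg_of_isUnit {n α : Type*} [Fintype n] [DecidableEq n] [CommRing α]
    {A : Matrix n n α} (hA : IsUnit A) : (-A)⁻¹ = -A⁻¹ :=
  Matrix.inv_eq_left_inv <| by
    rw [neg_mul_neg, Matrix.nonsing_inv_mul _ ((Matrix.isUnit_iff_isUnit_det A).mp hA)]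

theorem mconj_mul {N : ℕ} (A B : Matrix (Fin N) (Fin N) ℂ) :
    mconj (A * B) = mconj A * mconj B :=
  Matrix.map_mul

theorem mconj_sub {N : ℕ} (A B : Matrix (Fin N) (Fin N) ℂ) :
    mconj (A - B) = mconj A - mconj B :=
  Matrix.map_sub _ (map_sub _) A B

theorem mconj_inv {N : ℕ} (A : Matrix (Fin N) (Fin N) ℂ) : mconj A⁻¹ = (mconj A)⁻¹ := by
  have hdet : (mconj A).det = starRingEnd ℂ A.det := (RingHom.map_det _ A).symm
  have hadj : (mconj A).adjugate = mconj A.adjugate := ((starRingEnd ℂ).map_adjugate A).symm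
  rw [Matrix.inv_def, Matrix.inv_def, hdet, hadj, Ring.inverse_eq_inv', ← map_inv₀]
  exact Matrix.map_smul' _ _ _ (map_mul _)

theorem moutard_covariance_second_general {N : ℕ} (D : Set ℂ)
    (B Ψp F Fp ωFF ωFΨ : ℂ → Matrix (Fin N) (Fin N) ℂ)
    (hΨp : MatDiffOn Ψp D) (hFp : MatDiffOn Fp D) (hωFF : MatDiffOn ωFF D) (hωFΨ : MatDiffOn ωFΨ D)
    (hFpsys : ∀ z ∈ D, wDz Fp z - mconj (Fp z) * B z = 0)
    (hΨpsys : ∀ z ∈ D, wDz Ψp z - mconj (Ψp z) * B z = 0)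
    (hωFFz : ∀ z ∈ D, wDz ωFF z = - (mconj (Fp z) * F z))
    (hωFFim : ∀ z ∈ D, mconj (ωFF z) = - ωFF z)
    (hωFΨz : ∀ z ∈ D, wDz ωFΨ z = - (mconj (Ψp z) * F z))
    (hωFΨim : ∀ z ∈ D, mconj (ωFΨ z) = - ωFΨ z)
    (hinv : ∀ z ∈ D, IsUnit (ωFF z)) :
    ∀ z ∈ D,
      wDz (fun w => Ψp w - ωFΨ w * (ωFF w)⁻¹ * Fp w) z
        - mconj (Ψp z - ωFΨ z * (ωFF z)⁻¹ * Fp z)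
          * (B z + F z * (ωFF z)⁻¹ * Fp z) = 0 := by
  intro z hz
  have hω : MatDiffAt ωFF z := hωFF z hz
  have hωinv : MatDiffAt (fun w => (ωFF w)⁻¹) z := hω.inv (hinv z hz)
  have hωΨωinv : MatDiffAt (fun w => ωFΨ w * (ωFF w)⁻¹) z := MatDiffAt.mul (hωFΨ z hz) hωinv
  have hconj_ωinv : mconj (ωFF z)⁻¹ = -(ωFF z)⁻¹ := by
    rw [mconj_inv, hωFFim z hz, Matrix.inv_neg_of_isUnit (hinv z hz)]
  rw [wDz_sub (hΨp z hz) (hωΨωinv.mul (hFp z hz)), wDz_mul hωΨωinv (hFp z hz),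
    wDz_mul (hωFΨ z hz) hωinv, wDz_inv hω (hinv z hz), hωFFz z hz, hωFΨz z hz,
    sub_eq_zero.mp (hΨpsys z hz), sub_eq_zero.mp (hFpsys z hz), mconj_sub, mconj_mul,
    mconj_mul, hconj_ωinv, hωFΨim z hz]
  noncomm_ring

/-- Theorem 1, second covariance relation:
Ψ̃⁺ = Ψ⁺ − ω_{F,Ψ⁺}·ω_{F,F⁺}⁻¹·F⁺ satisfies ∂_z Ψ̃⁺ − conj(Ψ̃⁺)·B̃ = 0 with
B̃ = B + F·ω_{F,F⁺}⁻¹·F⁺. -/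
theorem moutard_covariance_second {N : ℕ} (D : Set ℂ) (hD : IsOpen D)
    (B Ψp F Fp ωFF ωFΨ : ℂ → Matrix (Fin N) (Fin N) ℂ)
    (hB : MatDiffOn B D) (hΨp : MatDiffOn Ψp D) (hF : MatDiffOn F D)
    (hFp : MatDiffOn Fp D) (hωFF : MatDiffOn ωFF D) (hωFΨ : MatDiffOn ωFΨ D)
    (hFsys : ∀ z ∈ D, wDzbar F z + B z * mconj (F z) = 0)
    (hFpsys : ∀ z ∈ D, wDz Fp z - mconj (Fp z) * B z = 0)
    (hΨpsys : ∀ z ∈ D, wDz Ψp z - mconj (Ψp z) * B z = 0)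
    (hωFFzbar : ∀ z ∈ D, wDzbar ωFF z = Fp z * mconj (F z))
    (hωFFz : ∀ z ∈ D, wDz ωFF z = - (mconj (Fp z) * F z))
    (hωFFim : ∀ z ∈ D, mconj (ωFF z) = - ωFF z)
    (hωFΨzbar : ∀ z ∈ D, wDzbar ωFΨ z = Ψp z * mconj (F z))
    (hωFΨz : ∀ z ∈ D, wDz ωFΨ z = - (mconj (Ψp z) * F z))
    (hωFΨim : ∀ z ∈ D, mconj (ωFΨ z) = - ωFΨ z)
    (hinv : ∀ z ∈ D, IsUnit (ωFF z)) :
    ∀ z ∈ D,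
      wDz (fun w => Ψp w - ωFΨ w * (ωFF w)⁻¹ * Fp w) z
        - mconj (Ψp z - ωFΨ z * (ωFF z)⁻¹ * Fp z)
          * (B z + F z * (ωFF z)⁻¹ * Fp z) = 0 :=
  moutard_covariance_second_general D B Ψp F Fp ωFF ωFΨ hΨp hFp hωFF hωFΨ hFpsys hΨpsys hωFFz hωFFim
    hωFΨz hωFΨim hinv
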